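/- If no item of M is huge for agent i (i.e., every item b satisfies V_i({b}) < V_i(M)/n), then the least-valuable bundle L_{i,n} of the LPT partition L_i satisfies V_i(L_{i,n}) ≥ V_i(M)/(2n). -/

import Mathlib

/-!
Agent `i` has an additive nonnegative valuation `V` on a finite set of items.
An item `b` is *huge* if `V b ≥ V(M)/n`.  The LPT partition is obtained by
processing the items in non-increasing order of value, each time putting the
current item into a bundle of minimum current value.
-/

/-- Value of bundle `j` of the partition `P` with respect to the valuation `V`. -/
noncomputable def bundleVal {Item : Type*} [Fintype Item] (V : Item → ℝ) {n : ℕ}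
    (P : Item → Fin n) (j : Fin n) : ℝ :=
  ∑ b, if P b = j then V b else 0

/-- An index of a bundle of minimum load. -/
noncomputable def argminLoad {n : ℕ} (hn : 0 < n) (load : Fin n → ℝ) : Fin n :=
  Classical.choose
    (Finset.exists_min_image Finset.univ load ⟨⟨0, hn⟩, Finset.mem_univ _⟩)

/-- The LPT partition obtained by processing the items in the order given by the
list `l` (which is intended to enumerate the items in non-increasing order of
value), each time putting the current item into a bundle of minimum current
value. -/
noncomputable def lptOfList {Item : Type*} [DecidableEq Item] {n : ℕ} (hn : 0 < n)
    (V : Item → ℝ) (l : List Item) : Item → Fin n :=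
  (l.foldl
    (fun st b =>
      (Function.update st.1 b (argminLoad hn st.2),
       Function.update st.2 (argminLoad hn st.2) (st.2 (argminLoad hn st.2) + V b)))
    ((fun _ => (⟨0, hn⟩ : Fin n)), fun _ => (0 : ℝ))).1

/-!
Every load is at most twice the current minimum load or below `T = V(M)/n`, and this is preserved by
each LPT step. When the next item `b` goes to a minimum bundle `a`: if `a` has load `0`, its new
load `V b` is below `T` because `b` is not huge; otherwise `a` already holds an item worth at least
`V b` (items come in non-increasing order), so the new load is at most `2 · load a`, which is at most
twice the new minimum. At the end, a minimum below `V(M)/(2n)` would force every load below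
`V(M)/n`, contradicting that the loads sum to `V(M)`.
-/

namespace LPT

open Finset

variable {Item : Type*} {n : ℕ} (hn : 0 < n)

theorem argminLoad_le (load : Fin n → ℝ) (j : Fin n) :
    load (argminLoad hn load) ≤ load j :=
  (Classical.choose_spec
    (exists_min_image univ load ⟨⟨0, hn⟩, mem_univ _⟩)).2 j (mem_univ j)

theorem sum_bundleVal [Fintype Item] (V : Item → ℝ) (P : Item → Fin n) :
    ∑ j, bundleVal V P j = ∑ b, V b := by
  simp only [bundleVal]
  rw [sum_comm]
  simp

noncomputable def addToMin (load : Fin n → ℝ) (x : ℝ) : Fin n → ℝ :=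
  Function.update load (argminLoad hn load) (load (argminLoad hn load) + x)

def NearlyBalanced (T : ℝ) (load : Fin n → ℝ) : Prop :=
  ∀ k, load k ≤ 2 * load (argminLoad hn load) ∨ load k < T

section AddToMin

variable {load : Fin n → ℝ} {x : ℝ}

theorem le_addToMin (hx : 0 ≤ x) (k : Fin n) : load k ≤ addToMin hn load x k := by
  by_cases hk : k = argminLoad hn load
  · subst hk
    simp [addToMin, hx]
  · simp [addToMin, hk]

theorem addToMin_eq_zero_or_ge (hload : ∀ k, 0 ≤ load k) (hgap : ∀ k, load k = 0 ∨ x ≤ load k)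
    (k : Fin n) : addToMin hn load x k = 0 ∨ x ≤ addToMin hn load x k := by
  by_cases hk : k = argminLoad hn load
  · subst hk
    simp only [addToMin, Function.update_self]
    exact Or.inr (by linarith [hload (argminLoad hn load)])
  · simpa [addToMin, hk] using hgap k

theorem nearlyBalanced_addToMin {T : ℝ} (hbal : NearlyBalanced hn T load) (hx : 0 ≤ x)
    (hxT : x < T) (hgap : ∀ k, load k = 0 ∨ x ≤ load k) :
    NearlyBalanced hn T (addToMin hn load x) := by
  set a := argminLoad hn load
  set load' := addToMin hn load x
  have hmin : load a ≤ load' (argminLoad hn load') :=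
    (argminLoad_le hn load _).trans (le_addToMin hn hx _)
  have ha : load' a = load a + x := Function.update_self _ _ _
  intro k
  by_cases hk : k = a
  · rw [hk, ha]
    rcases hgap a with h | h
    · exact Or.inr (by linarith)
    · exact Or.inl (by linarith)
  · rw [show load' k = load k from Function.update_of_ne hk _ _]
    exact (hbal k).imp (fun h => by linarith) id

end AddToMin

section Fold

variable [DecidableEq Item] (V : Item → ℝ)

noncomputable def lptStep (st : (Item → Fin n) × (Fin n → ℝ)) (b : Item) :
    (Item → Fin n) × (Fin n → ℝ) :=
  (Function.update st.1 b (argminLoad hn st.2), addToMin hn st.2 (V b))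

theorem foldl_lptStep_fst_of_not_mem (r : List Item) (st : (Item → Fin n) × (Fin n → ℝ))
    {c : Item} (hc : c ∉ r) : (r.foldl (lptStep hn V) st).1 c = st.1 c := by
  induction r generalizing st with
  | nil => rfl
  | cons b t ih =>
    rw [List.foldl_cons, ih _ (fun h => hc (List.mem_cons_of_mem _ h))]
    exact Function.update_of_ne (List.ne_of_not_mem_cons hc) _ _

theorem foldl_lptStep_snd (r : List Item) (hr : r.Nodup) (st : (Item → Fin n) × (Fin n → ℝ))
    (k : Fin n) :
    (r.foldl (lptStep hn V) st).2 k =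
      st.2 k + ∑ b ∈ r.toFinset, if (r.foldl (lptStep hn V) st).1 b = k then V b else 0 := by
  induction r generalizing st with
  | nil => simp
  | cons b t ih =>
    obtain ⟨hbt, ht⟩ := List.nodup_cons.mp hr
    have hb : (t.foldl (lptStep hn V) (lptStep hn V st b)).1 b = argminLoad hn st.2 := by
      rw [foldl_lptStep_fst_of_not_mem hn V t _ hbt]
      simp [lptStep]
    have hstep : (lptStep hn V st b).2 k =
        st.2 k + if argminLoad hn st.2 = k then V b else 0 := by
      by_cases hk : argminLoad hn st.2 = k
      · subst hk
        simp [lptStep, addToMin]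
      · rw [if_neg hk]
        simp [lptStep, addToMin, Ne.symm hk]
    rw [List.foldl_cons, ih ht, List.toFinset_cons, sum_insert (by simpa using hbt), hb, hstep,
      add_assoc]

theorem bundleVal_lptOfList [Fintype Item] (l : List Item) (hl : l.Nodup) (hmem : ∀ b, b ∈ l) :
    bundleVal V (lptOfList hn V l) =
      (l.foldl (lptStep hn V) ((fun _ => ⟨0, hn⟩), fun _ => 0)).2 := by
  have huniv : l.toFinset = univ := eq_univ_of_forall fun b => List.mem_toFinset.mpr (hmem b)
  funext k
  rw [foldl_lptStep_snd hn V l hl, huniv]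
  simp only [bundleVal, zero_add]
  rfl

theorem nearlyBalanced_foldl_lptStep (hV : ∀ b, 0 ≤ V b) {T : ℝ} (r : List Item)
    (hT : ∀ b ∈ r, V b < T) (hsort : r.Pairwise fun a b => V b ≤ V a)
    (st : (Item → Fin n) × (Fin n → ℝ)) (hload : ∀ k, 0 ≤ st.2 k)
    (hgap : ∀ k, st.2 k = 0 ∨ ∀ b ∈ r, V b ≤ st.2 k) (hbal : NearlyBalanced hn T st.2) :
    NearlyBalanced hn T (r.foldl (lptStep hn V) st).2 := by
  induction r generalizing st with
  | nil => exact hbal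
  | cons b t ih =>
    obtain ⟨hbt, ht⟩ := List.pairwise_cons.mp hsort
    have hgap_b : ∀ k, st.2 k = 0 ∨ V b ≤ st.2 k :=
      fun k => (hgap k).imp_right fun h => h b List.mem_cons_self
    refine ih (fun c hc => hT c (List.mem_cons_of_mem _ hc)) ht _
      (fun k => (hload k).trans (le_addToMin hn (hV b) k)) (fun k => ?_)
      (nearlyBalanced_addToMin hn hbal (hV b) (hT b List.mem_cons_self) hgap_b)
    exact (addToMin_eq_zero_or_ge hn hload hgap_b k).imp_right
      fun h c hc => (hbt c hc).trans h

end Fold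

theorem sum_div_two_mul_le_of_nearlyBalanced {load : Fin n → ℝ}
    (hbal : NearlyBalanced hn ((∑ k, load k) / n) load) :
    (∑ k, load k) / (2 * n) ≤ load (argminLoad hn load) := by
  set S := ∑ k, load k
  have hn' : (0 : ℝ) < n := by exact_mod_cast hn
  by_contra! hlt
  have hbelow : ∀ k, load k < S / n := fun k =>
    (hbal k).elim (fun h => calc
      load k ≤ 2 * load (argminLoad hn load) := h
      _ < 2 * (S / (2 * n)) := by linarith
      _ = S / n := by field_simp) id
  have hsum := sum_lt_sum_of_nonempty (univ_nonempty_iff.mpr ⟨⟨0, hn⟩⟩) fun k _ => hbelow k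
  rw [sum_const, card_univ, Fintype.card_fin, nsmul_eq_mul, mul_div_cancel₀ _ hn'.ne'] at hsum
  exact lt_irrefl _ hsum

end LPT

open LPT in
/-- If no item is huge for agent `i` (every item `b` satisfies
`V b < V(M)/n`), then every bundle of the LPT partition — in particular the
least-valuable one — has value at least `V(M)/(2n)`. -/
theorem lpt_min_bundle_ge_of_no_huge {Item : Type*} [Fintype Item] [DecidableEq Item]
    {n : ℕ} (hn : 0 < n) (V : Item → ℝ) (hV : ∀ b, 0 ≤ V b)
    (hnohuge : ∀ b, V b < (∑ a, V a) / n)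
    (l : List Item) (hnd : l.Nodup) (hmem : ∀ b, b ∈ l)
    (hsort : l.Pairwise fun a b => V b ≤ V a) :
    ∀ j : Fin n, (∑ a, V a) / (2 * n) ≤ bundleVal V (lptOfList hn V l) j := by
  intro j
  set P := lptOfList hn V l
  have hbal : NearlyBalanced hn ((∑ a, V a) / n) (bundleVal V P) := by
    rw [bundleVal_lptOfList hn V l hnd hmem]
    exact nearlyBalanced_foldl_lptStep hn V hV l (fun b _ => hnohuge b) hsort _
      (fun _ => le_rfl) (fun _ => Or.inl rfl) (fun _ => Or.inl (by simp))
  rw [← sum_bundleVal V P] at hbal ⊢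
  exact (sum_div_two_mul_le_of_nearlyBalanced hn hbal).trans (argminLoad_le hn _ j)
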